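/- Assume the block setup and QR setup, and suppose F_{j−1}^{(G)} has rank L. Then H_j is singular with rank H_j = (j−1)L if and only if block GMRES totally stagnates at step j, i.e. X_j^{(G)} = X_{j−1}^{(G)}. -/

import Mathlib

open Matrix

noncomputable section

set_option maxHeartbeats 1000000

/-- Squared Frobenius norm of a complex matrix. -/
def frobSq {a b : Type*} [Fintype a] [Fintype b] (M : Matrix a b ℂ) : ℝ :=
  ∑ r, ∑ c, Complex.normSq (M r c)

/-- The four Moore–Penrose conditions. -/
def IsMoorePenrose {a b : Type*} [Fintype a] [Fintype b]
    (M : Matrix a b ℂ) (P : Matrix b a ℂ) : Prop :=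
  M * P * M = M ∧ P * M * P = P ∧ (M * P)ᴴ = M * P ∧ (P * M)ᴴ = P * M

/-- The block Krylov subspace `𝕂_i(A, F)`: the span of all columns of
`F, A F, …, A^(i-1) F`. -/
def blockKrylov {n L : ℕ} (A : Matrix (Fin n) (Fin n) ℂ)
    (F : Matrix (Fin n) (Fin L) ℂ) (i : ℕ) : Submodule ℂ (Fin n → ℂ) :=
  Submodule.span ℂ { v | ∃ k < i, ∃ c : Fin L, v = fun r => (A ^ k * F) r c }

/-- `E_L^{[mL]}` : the first `L` columns of the `mL × mL` identity matrix
(block row indexing). -/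
def EL (m L : ℕ) : Matrix (Fin m × Fin L) (Fin L) ℂ :=
  Matrix.of fun r c => if (r.1 : ℕ) = 0 ∧ r.2 = c then 1 else 0

/-- An `L × L` matrix is upper triangular. -/
def utL {L : ℕ} (M : Matrix (Fin L) (Fin L) ℂ) : Prop :=
  ∀ a b : Fin L, (b : ℕ) < (a : ℕ) → M a b = 0

/-- A block-indexed `mL × mL` matrix is upper triangular. -/
def utBig {m L : ℕ} (M : Matrix (Fin m × Fin L) (Fin m × Fin L) ℂ) : Prop :=
  ∀ r c : Fin m × Fin L, (c.1 : ℕ) * L + (c.2 : ℕ) < (r.1 : ℕ) * L + (r.2 : ℕ) → M r c = 0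

/-- Stack a block-tall matrix on top of an extra block row. -/
def vcat {m L : ℕ} {col : Type*} (T : Matrix (Fin m × Fin L) col ℂ)
    (Bo : Matrix (Fin L) col ℂ) : Matrix (Fin (m+1) × Fin L) col ℂ :=
  Matrix.of fun r cc => if h : (r.1 : ℕ) < m then T (⟨r.1, h⟩, r.2) cc else Bo r.2 cc

/-- The block matrix `[[R, Z], [0, N]]`. -/
def twoBlock {m L : ℕ} (R : Matrix (Fin m × Fin L) (Fin m × Fin L) ℂ)
    (Z : Matrix (Fin m × Fin L) (Fin L) ℂ) (N : Matrix (Fin L) (Fin L) ℂ) :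
    Matrix (Fin (m+1) × Fin L) (Fin (m+1) × Fin L) ℂ :=
  Matrix.of fun r c =>
    if hr : (r.1 : ℕ) < m then
      if hc : (c.1 : ℕ) < m then R (⟨r.1, hr⟩, r.2) (⟨c.1, hc⟩, c.2)
      else Z (⟨r.1, hr⟩, r.2) c.2
    else
      if (c.1 : ℕ) < m then 0 else N r.2 c.2

/-- The block matrix `[[R, Z], [0, Hmid], [0, Hbot]]`. -/
def threeBlock {m L : ℕ} (R : Matrix (Fin m × Fin L) (Fin m × Fin L) ℂ)
    (Z : Matrix (Fin m × Fin L) (Fin L) ℂ) (Hmid Hbot : Matrix (Fin L) (Fin L) ℂ) :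
    Matrix (Fin (m+2) × Fin L) (Fin (m+1) × Fin L) ℂ :=
  Matrix.of fun r c =>
    if hr : (r.1 : ℕ) < m then
      if hc : (c.1 : ℕ) < m then R (⟨r.1, hr⟩, r.2) (⟨c.1, hc⟩, c.2)
      else Z (⟨r.1, hr⟩, r.2) c.2
    else
      if (c.1 : ℕ) < m then 0
      else if (r.1 : ℕ) = m then Hmid r.2 c.2 else Hbot r.2 c.2

/-- `diag(Q, I_L)` : extend a block-indexed square matrix by an identity block. -/
def extendOne {m L : ℕ} (Q : Matrix (Fin m × Fin L) (Fin m × Fin L) ℂ) :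
    Matrix (Fin (m+1) × Fin L) (Fin (m+1) × Fin L) ℂ :=
  Matrix.of fun r c =>
    if hr : (r.1 : ℕ) < m then
      if hc : (c.1 : ℕ) < m then Q (⟨r.1, hr⟩, r.2) (⟨c.1, hc⟩, c.2) else 0
    else
      if (c.1 : ℕ) < m then 0 else if r.2 = c.2 then 1 else 0

/-- `diag(I_{mL}, Q)` : an identity block, then `Q` in the bottom right corner. -/
def extendBot {m L : ℕ} (Q : Matrix (Fin L) (Fin L) ℂ) :
    Matrix (Fin (m+1) × Fin L) (Fin (m+1) × Fin L) ℂ :=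
  Matrix.of fun r c =>
    if (r.1 : ℕ) < m ∨ (c.1 : ℕ) < m then (if r = c then 1 else 0)
    else Q r.2 c.2

/-- The `(m+2)L × (m+2)L` matrix which is the identity outside of its trailing
principal `2L × 2L` block, which is `[[Q11, Q12], [Q21, Q22]]`. -/
def trailingTwo {m L : ℕ} (Q11 Q12 Q21 Q22 : Matrix (Fin L) (Fin L) ℂ) :
    Matrix (Fin (m+2) × Fin L) (Fin (m+2) × Fin L) ℂ :=
  Matrix.of fun r c =>
    if (r.1 : ℕ) < m ∨ (c.1 : ℕ) < m then (if r = c then 1 else 0)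
    else if (r.1 : ℕ) = m then
      (if (c.1 : ℕ) = m then Q11 r.2 c.2 else Q12 r.2 c.2)
    else
      (if (c.1 : ℕ) = m then Q21 r.2 c.2 else Q22 r.2 c.2)

/-- The block matrix `[R ; 0]` (one extra zero block row below `R`). -/
def stackZero {m L : ℕ} (R : Matrix (Fin m × Fin L) (Fin m × Fin L) ℂ) :
    Matrix (Fin (m+1) × Fin L) (Fin m × Fin L) ℂ :=
  Matrix.of fun r c => if h : (r.1 : ℕ) < m then R (⟨r.1, h⟩, r.2) c else 0

/-- A breakdown-free block Arnoldi decomposition of length `j = p + 1` for the block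
linear system `A X = B` with initial guess `X₀` (block size `L`). -/
structure BlockArnoldi (n L p : ℕ) : Type where
  A : Matrix (Fin n) (Fin n) ℂ
  B : Matrix (Fin n) (Fin L) ℂ
  X0 : Matrix (Fin n) (Fin L) ℂ
  W : Matrix (Fin n) (Fin (p+2) × Fin L) ℂ
  S0 : Matrix (Fin L) (Fin L) ℂ
  Hbar : Matrix (Fin (p+2) × Fin L) (Fin (p+1) × Fin L) ℂ
  hL : 1 ≤ L
  hn : (p+2) * L ≤ n
  F0_rank : (B - A * X0).rank = L
  orth : Wᴴ * W = 1
  S0_ut : utL S0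
  S0_inv : IsUnit S0
  F0_eq : B - A * X0 = (W.submatrix id fun c : Fin L => ((0 : Fin (p+2)), c)) * S0
  span : ∀ i : ℕ, i ≤ p + 2 →
    blockKrylov A (B - A * X0) i =
      Submodule.span ℂ { v | ∃ c : Fin (p+2) × Fin L, (c.1 : ℕ) < i ∧ v = fun r => W r c }
  arnoldi : A * W.submatrix id (Prod.map Fin.castSucc id) = W * Hbar
  hess : ∀ r c, (c.1 : ℕ) + 1 < (r.1 : ℕ) → Hbar r c = 0
  sub_ut : ∀ (k : Fin (p+1)) (a b : Fin L), (b : ℕ) < (a : ℕ) → Hbar (k.succ, a) (k, b) = 0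
  sub_inv : ∀ k : Fin (p+1), IsUnit (Matrix.of fun a b : Fin L => Hbar (k.succ, a) (k, b))

namespace BlockArnoldi

variable {n L p : ℕ}

/-- `H̄_{j-1}`, the leading `jL × (j-1)L` submatrix of `H̄_j`. -/
def Hprev (D : BlockArnoldi n L p) : Matrix (Fin (p+1) × Fin L) (Fin p × Fin L) ℂ :=
  D.Hbar.submatrix (Prod.map Fin.castSucc id) (Prod.map Fin.castSucc id)

/-- `H_j`, the leading `jL × jL` submatrix of `H̄_j`. -/
def Hsq (D : BlockArnoldi n L p) : Matrix (Fin (p+1) × Fin L) (Fin (p+1) × Fin L) ℂ :=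
  D.Hbar.submatrix (Prod.map Fin.castSucc id) id

/-- `W_j = [V₁ … V_j]`. -/
def Wfull (D : BlockArnoldi n L p) : Matrix (Fin n) (Fin (p+1) × Fin L) ℂ :=
  D.W.submatrix id (Prod.map Fin.castSucc id)

/-- `W_{j-1} = [V₁ … V_{j-1}]`. -/
def Wprev (D : BlockArnoldi n L p) : Matrix (Fin n) (Fin p × Fin L) ℂ :=
  D.W.submatrix id (Prod.map (fun i : Fin p => (i.castSucc.castSucc : Fin (p+2))) id)

/-- `V_j`, the `j`-th block Arnoldi vector. -/
def Vj (D : BlockArnoldi n L p) : Matrix (Fin n) (Fin L) ℂ :=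
  D.W.submatrix id fun c : Fin L => (((Fin.last p).castSucc : Fin (p+2)), c)

end BlockArnoldi

/-- `Y` is the unique minimizer of `‖Hb • Y' - T‖_F` over all `Y'`. -/
def IsUniqueFrobMin {a b c : Type*} [Fintype a] [Fintype b] [Fintype c]
    (Hb : Matrix a b ℂ) (T : Matrix a c ℂ) (Y : Matrix b c ℂ) : Prop :=
  (∀ Y', frobSq (Hb * Y - T) ≤ frobSq (Hb * Y' - T)) ∧
  ∀ Y', (∀ Y'', frobSq (Hb * Y' - T) ≤ frobSq (Hb * Y'' - T)) → Y' = Y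

/-- `Y_j^{(G)}` is the solution of the `j`-th block GMRES least-squares subproblem. -/
def IsBlockGMRESj {n L p : ℕ} (D : BlockArnoldi n L p)
    (Y : Matrix (Fin (p+1) × Fin L) (Fin L) ℂ) : Prop :=
  IsUniqueFrobMin D.Hbar (EL (p+2) L * D.S0) Y

/-- `Y_{j-1}^{(G)}` is the solution of the `(j-1)`-st block GMRES least-squares
subproblem. -/
def IsBlockGMRESprev {n L p : ℕ} (D : BlockArnoldi n L p)
    (Y : Matrix (Fin p × Fin L) (Fin L) ℂ) : Prop :=
  IsUniqueFrobMin D.Hprev (EL (p+1) L * D.S0) Y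

/-- The QR setup at step `j = p+1` : a QR factorization `Q̄_{j-1} H̄_{j-1} = [R_{j-1}; 0]`
from the previous step, the induced splitting
`diag(Q̄_{j-1}, I_L)·H̄_j = [[R,Z],[0,Ĥ_{jj}],[0,H_{j+1,j}]]`, the unitary `Q_j`
(identity outside its trailing principal `2L×2L` block) completing the
QR factorization of `H̄_j`, and the unitary `Q̂_j^{(b)}` triangularizing `Ĥ_{jj}`. -/
structure QRSetup (L p : ℕ) (Hbar : Matrix (Fin (p+2) × Fin L) (Fin (p+1) × Fin L) ℂ)
    (S0 : Matrix (Fin L) (Fin L) ℂ) : Type where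
  Qbar : Matrix (Fin (p+1) × Fin L) (Fin (p+1) × Fin L) ℂ
  R : Matrix (Fin p × Fin L) (Fin p × Fin L) ℂ
  Z : Matrix (Fin p × Fin L) (Fin L) ℂ
  Hhat : Matrix (Fin L) (Fin L) ℂ
  Hsub : Matrix (Fin L) (Fin L) ℂ
  Q11 : Matrix (Fin L) (Fin L) ℂ
  Q12 : Matrix (Fin L) (Fin L) ℂ
  Q21 : Matrix (Fin L) (Fin L) ℂ
  Q22 : Matrix (Fin L) (Fin L) ℂ
  N : Matrix (Fin L) (Fin L) ℂ
  Qhatb : Matrix (Fin L) (Fin L) ℂ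
  Nhat : Matrix (Fin L) (Fin L) ℂ
  Qbar_unit : Qbarᴴ * Qbar = 1
  Qbar_base : p = 0 → Qbar = 1
  R_ut : utBig R
  R_inv : IsUnit R
  qr_prev : Qbar * Hbar.submatrix (Prod.map Fin.castSucc id) (Prod.map Fin.castSucc id)
      = stackZero R
  qr_split : extendOne Qbar * Hbar = threeBlock R Z Hhat Hsub
  Qj_unit : (trailingTwo (m := p) Q11 Q12 Q21 Q22)ᴴ * trailingTwo (m := p) Q11 Q12 Q21 Q22 = 1
  qr_full : trailingTwo (m := p) Q11 Q12 Q21 Q22 * (extendOne Qbar * Hbar)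
      = threeBlock R Z N 0
  N_ut : utL N
  N_inv : IsUnit N
  Qhatb_unit : Qhatbᴴ * Qhatb = 1
  Nhat_def : Nhat = Qhatb * Hhat
  Nhat_ut : utL Nhat

namespace QRSetup

variable {L p : ℕ} {Hbar : Matrix (Fin (p+2) × Fin L) (Fin (p+1) × Fin L) ℂ}
  {S0 : Matrix (Fin L) (Fin L) ℂ}

/-- `C̃_j` : the last `L` rows of `Q̄_{j-1} E_L^{[jL]} S₀`. -/
def Ct (S : QRSetup L p Hbar S0) : Matrix (Fin L) (Fin L) ℂ :=
  Matrix.of fun a b => (S.Qbar * (EL (p+1) L * S0)) ((Fin.last p), a) b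

/-- `C_j := Q_j^{(11)} C̃_j`. -/
def C (S : QRSetup L p Hbar S0) : Matrix (Fin L) (Fin L) ℂ := S.Q11 * S.Ct

/-- `Ĉ_j := Q̂_j^{(b)} C̃_j`. -/
def Chat (S : QRSetup L p Hbar S0) : Matrix (Fin L) (Fin L) ℂ := S.Qhatb * S.Ct

end QRSetup

/-!
After the previous QR step, `Q̄_{j-1} H_j = [[R_{j-1}, Z_j], [0, Ĥ_jj]]` with `R_{j-1}` invertible,
so `H_j` has rank `(j-1)L` (and is then singular) iff `Ĥ_jj = 0`. The unitary trailing block of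
`Q_j` maps `[Ĥ_jj; H_{j+1,j}]` to `[N_j; 0]` with `N_j` invertible, which forces
`Ĥ_jj = 0 ↔ Q_j^{(11)} = 0`. Solving both least-squares problems through the QR factorizations
gives `R_{j-1} Y_top + Z_j Y_bot = R_{j-1} Y_{j-1}` and `N_j Y_bot = Q_j^{(11)} C̃_j`, and `C̃_j` is
invertible because `F_{j-1}^{(G)} = W_j Q̄_{j-1}ᴴ [0; C̃_j]` has rank `L`. So total stagnation,
`Y_j = [Y_{j-1}; 0]`, holds iff `Y_bot = 0` iff `Q_j^{(11)} = 0`.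
-/

section LeastSquares

variable {m κ δ γ : Type*} [Fintype m] [Fintype κ] [Fintype δ] [Fintype γ]

lemma frobSq_eq_re_trace (M : Matrix m κ ℂ) : frobSq M = (Mᴴ * M).trace.re := by
  simp only [frobSq, trace, diag_apply, mul_apply, conjTranspose_apply, Complex.re_sum]
  rw [Finset.sum_comm]
  refine Finset.sum_congr rfl fun _ _ => Finset.sum_congr rfl fun _ _ => ?_
  simp [Complex.normSq_apply, Complex.mul_re]

lemma frobSq_unitary_mul [DecidableEq m] {U : Matrix m m ℂ} (hU : Uᴴ * U = 1)
    (M : Matrix m κ ℂ) : frobSq (U * M) = frobSq M := by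
  rw [frobSq_eq_re_trace, frobSq_eq_re_trace, conjTranspose_mul, Matrix.mul_assoc,
    ← Matrix.mul_assoc Uᴴ, hU, Matrix.one_mul]

lemma frobSq_submatrix_equiv (M : Matrix m κ ℂ) (e : δ ≃ m) :
    frobSq (M.submatrix e id) = frobSq M :=
  e.sum_comp fun r => ∑ c, Complex.normSq (M r c)

lemma frobSq_fromRows (A : Matrix κ γ ℂ) (B : Matrix δ γ ℂ) :
    frobSq (fromRows A B) = frobSq A + frobSq B := by
  simp [frobSq, Fintype.sum_sum_type]

lemma frobSq_zero : frobSq (0 : Matrix m κ ℂ) = 0 := by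
  simp [frobSq]

lemma frobSq_nonneg (M : Matrix m κ ℂ) : 0 ≤ frobSq M :=
  Finset.sum_nonneg fun _ _ => Finset.sum_nonneg fun _ _ => Complex.normSq_nonneg _

lemma IsUniqueFrobMin.mul_eq_toRows₁ {κ' : Type*} [Fintype κ'] [DecidableEq m]
    [DecidableEq κ'] {Hb : Matrix m κ ℂ} {T : Matrix m γ ℂ} {Y : Matrix κ γ ℂ}
    (hY : IsUniqueFrobMin Hb T Y) {U : Matrix m m ℂ} (hU : Uᴴ * U = 1)
    (er : κ' ⊕ δ ≃ m) (ec : κ' ≃ κ) {Rm : Matrix κ' κ' ℂ} (hRm : IsUnit Rm)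
    (hQR : (U * Hb).submatrix er ec = fromRows Rm 0) :
    Rm * Y.submatrix ec id = ((U * T).submatrix er id).toRows₁ := by
  set T' := (U * T).submatrix er id
  have hres : ∀ Y' : Matrix κ γ ℂ, frobSq (Hb * Y' - T) =
      frobSq (Rm * Y'.submatrix ec id - T'.toRows₁) + frobSq T'.toRows₂ := by
    intro Y'
    have hblocks : (U * (Hb * Y' - T)).submatrix er id =
        fromRows (Rm * Y'.submatrix ec id - T'.toRows₁) (-T'.toRows₂) := by
      have hUHY : (U * Hb * Y').submatrix er id = fromRows Rm 0 * Y'.submatrix ec id := by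
        rw [← hQR, submatrix_mul_equiv]
      rw [Matrix.mul_sub, ← Matrix.mul_assoc]
      change (U * Hb * Y').submatrix er id - T' = _
      rw [hUHY, ← fromRows_toRows T']
      ext (i | i) j <;> simp [fromRows_mul, sub_eq_neg_add]
    rw [← frobSq_unitary_mul hU, ← frobSq_submatrix_equiv _ er, hblocks, frobSq_fromRows]
    simp [frobSq]
  set Y₀ : Matrix κ γ ℂ := (Rm⁻¹ * T'.toRows₁).submatrix ec.symm id
  have hY₀ : Rm * Y₀.submatrix ec id = T'.toRows₁ := by
    simpa [Y₀] using Rm.mul_nonsing_inv_cancel_left _ ((isUnit_iff_isUnit_det _).mp hRm)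
  have hmin : ∀ Y' : Matrix κ γ ℂ, frobSq (Hb * Y₀ - T) ≤ frobSq (Hb * Y' - T) := fun Y' => by
    rw [hres, hres, hY₀, sub_self, frobSq_zero]
    exact add_le_add_left (frobSq_nonneg _) _
  rw [← hY.2 Y₀ hmin, hY₀]

end LeastSquares

section BlockMatrix

variable {κ δ : Type*} [Fintype κ] [Fintype δ]

lemma rank_fromBlocks_zero₂₁_eq_card_iff {K : Type*} [Field K] [DecidableEq κ] {R : Matrix κ κ K}
    (hR : IsUnit R) (Z : Matrix κ δ K) (H : Matrix δ δ K) :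
    (fromBlocks R Z 0 H).rank = Fintype.card κ ↔ H = 0 := by
  constructor
  · intro hrank
    by_contra hH
    obtain ⟨d, c, hdc⟩ : ∃ d c, H d c ≠ 0 := by
      by_contra! h
      exact hH (Matrix.ext h)
    -- an invertible minor of size `card κ + 1` exceeds the rank
    set minor := (fromBlocks R Z 0 H).submatrix (Sum.elim Sum.inl fun _ : Unit => Sum.inr d)
      (Sum.elim Sum.inl fun _ : Unit => Sum.inr c)
    have hminor : minor = fromBlocks R (Z.submatrix id fun _ => c) 0 (of fun _ _ => H d c) := by
      ext (i | i) (j | j) <;> rfl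
    have hunit : IsUnit minor := by
      rw [hminor, isUnit_iff_isUnit_det, det_fromBlocks_zero₂₁, det_unique (of fun _ _ => H d c)]
      exact ((isUnit_iff_isUnit_det _).mp hR).mul (Ne.isUnit hdc)
    have := (rank_of_isUnit _ hunit).symm.trans_le (rank_submatrix_le _ _ _)
    simp only [Fintype.card_sum, Fintype.card_unit] at this
    omega
  · rintro rfl
    refine le_antisymm ?_ ?_
    · calc (fromBlocks R Z 0 0).rank = (fromRows (1 : Matrix κ κ K) 0 * fromCols R Z).rank := by
            rw [fromRows_mul, Matrix.one_mul, Matrix.zero_mul]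
            congr 1
            ext (i | i) (j | j) <;> simp
        _ ≤ Fintype.card κ := (rank_mul_le_left _ _).trans (rank_le_card_width _)
    · calc Fintype.card κ = R.rank := (rank_of_isUnit R hR).symm
        _ ≤ _ := rank_submatrix_le (fromBlocks R Z 0 0) Sum.inl Sum.inl

lemma eq_zero_iff_of_unitary_fromBlocks_mul_fromRows {K : Type*} [CommRing K] [StarRing K]
    [DecidableEq δ] {Q₁₁ Q₁₂ Q₂₁ Q₂₂ H₁ H₂ N : Matrix δ δ K}
    (hQ : (fromBlocks Q₁₁ Q₁₂ Q₂₁ Q₂₂)ᴴ * fromBlocks Q₁₁ Q₁₂ Q₂₁ Q₂₂ = 1)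
    (hQH : fromBlocks Q₁₁ Q₁₂ Q₂₁ Q₂₂ * fromRows H₁ H₂ = fromRows N 0) (hN : IsUnit N) :
    H₁ = 0 ↔ Q₁₁ = 0 := by
  rw [fromBlocks_conjTranspose, fromBlocks_multiply, ← fromBlocks_one, fromBlocks_inj] at hQ
  obtain ⟨hcol₁, hcol₁₂, -, -⟩ := hQ
  rw [fromBlocks_mul_fromRows, fromRows_inj.eq_iff] at hQH
  obtain ⟨hN', h0⟩ := hQH
  constructor
  · rintro rfl
    rw [Matrix.mul_zero, zero_add] at hN' h0
    rw [← hN', isUnit_iff_isUnit_det, det_mul] at hN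
    have hH₂ : IsUnit H₂ := (isUnit_iff_isUnit_det _).mpr (isUnit_of_mul_isUnit_right hN)
    have hQ₁₂ : IsUnit Q₁₂ := (isUnit_iff_isUnit_det _).mpr (isUnit_of_mul_isUnit_left hN)
    rw [hH₂.mul_left_eq_zero.mp h0, Matrix.mul_zero, add_zero, hQ₁₂.mul_left_eq_zero,
      conjTranspose_eq_zero] at hcol₁₂
    exact hcol₁₂
  · rintro rfl
    rw [conjTranspose_zero, Matrix.zero_mul, zero_add] at hcol₁ hcol₁₂
    have hQ₂₁ : IsUnit Q₂₁ := (isUnit_iff_isUnit_det _).mpr (isUnit_det_of_left_inverse hcol₁)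
    rw [((isUnit_conjTranspose _).mpr hQ₂₁).mul_right_eq_zero.mp hcol₁₂, Matrix.zero_mul,
      add_zero] at h0
    exact hQ₂₁.mul_right_eq_zero.mp h0

lemma isUnit_of_rank_eq_card {K : Type*} [Field K] [DecidableEq δ] {A : Matrix δ δ K}
    (h : A.rank = Fintype.card δ) : IsUnit A := by
  have hrange : LinearMap.range A.mulVecLin = ⊤ :=
    Submodule.eq_top_of_finrank_eq (h.trans (Module.finrank_fintype_fun_eq_card K).symm)
  exact mulVec_surjective_iff_isUnit.mp (LinearMap.range_eq_top.mp hrange)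

lemma submatrix_equiv_id_inj {α β ν R : Type*} {M N : Matrix α ν R} (e : β ≃ α) :
    M.submatrix e id = N.submatrix e id ↔ M = N :=
  ⟨fun h => by simpa using congrArg (·.submatrix e.symm id) h, fun h => h ▸ rfl⟩

lemma fromRows_fromRows_submatrix_sumAssoc {α β γ ν R : Type*} (A : Matrix α ν R)
    (B : Matrix β ν R) (C : Matrix γ ν R) :
    (fromRows A (fromRows B C)).submatrix (Equiv.sumAssoc α β γ) id =
      fromRows (fromRows A B) C := by
  ext ((i | i) | i) j <;> rfl

end BlockMatrix

section BlockIndex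

variable {m L : ℕ}

def blockSumEquiv (m L : ℕ) : (Fin m × Fin L) ⊕ Fin L ≃ Fin (m+1) × Fin L where
  toFun := Sum.elim (Prod.map Fin.castSucc id) (Prod.mk (Fin.last m))
  invFun r := Fin.lastCases (Sum.inr r.2) (fun i => Sum.inl (i, r.2)) r.1
  left_inv := by rintro (⟨i, a⟩ | a) <;> simp
  right_inv := by
    rintro ⟨i, a⟩
    induction i using Fin.lastCases <;> simp

@[simp] lemma blockSumEquiv_inl (k : Fin m × Fin L) :
    blockSumEquiv m L (Sum.inl k) = (k.1.castSucc, k.2) := rfl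

@[simp] lemma blockSumEquiv_inr (a : Fin L) : blockSumEquiv m L (Sum.inr a) = (Fin.last m, a) :=
  rfl

def blockSumSumEquiv (m L : ℕ) : (Fin m × Fin L) ⊕ (Fin L ⊕ Fin L) ≃ Fin (m+2) × Fin L :=
  (Equiv.sumAssoc _ _ _).symm.trans
    ((Equiv.sumCongr (blockSumEquiv m L) (Equiv.refl _)).trans (blockSumEquiv (m+1) L))

@[simp] lemma blockSumSumEquiv_inl (k : Fin m × Fin L) :
    blockSumSumEquiv m L (Sum.inl k) = (k.1.castSucc.castSucc, k.2) := rfl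

@[simp] lemma blockSumSumEquiv_inr_inl (a : Fin L) :
    blockSumSumEquiv m L (Sum.inr (Sum.inl a)) = ((Fin.last m).castSucc, a) := rfl

@[simp] lemma blockSumSumEquiv_inr_inr (a : Fin L) :
    blockSumSumEquiv m L (Sum.inr (Sum.inr a)) = (Fin.last (m+1), a) := rfl

variable (R : Matrix (Fin m × Fin L) (Fin m × Fin L) ℂ) (Z : Matrix (Fin m × Fin L) (Fin L) ℂ)

lemma twoBlock_submatrix (N : Matrix (Fin L) (Fin L) ℂ) :
    (twoBlock R Z N).submatrix (blockSumEquiv m L) (blockSumEquiv m L) = fromBlocks R Z 0 N := by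
  ext (i | i) (j | j) <;> simp [twoBlock]

lemma threeBlock_submatrix (H₁ H₂ : Matrix (Fin L) (Fin L) ℂ) :
    (threeBlock R Z H₁ H₂).submatrix (blockSumSumEquiv m L) (blockSumEquiv m L) =
      fromBlocks R Z 0 (fromRows H₁ H₂) := by
  ext (i | i | i) (j | j) <;> simp [threeBlock]

lemma threeBlock_submatrix_castSucc (H₁ H₂ : Matrix (Fin L) (Fin L) ℂ) :
    (threeBlock R Z H₁ H₂).submatrix (Prod.map Fin.castSucc id) id = twoBlock R Z H₁ := by
  ext ⟨i, a⟩ ⟨j, b⟩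
  simp only [threeBlock, twoBlock, submatrix_apply, of_apply, Prod.map, id, Fin.val_castSucc]
  split_ifs <;> first | rfl | omega

lemma trailingTwo_submatrix (Q₁₁ Q₁₂ Q₂₁ Q₂₂ : Matrix (Fin L) (Fin L) ℂ) :
    (trailingTwo (m := m) Q₁₁ Q₁₂ Q₂₁ Q₂₂).submatrix (blockSumSumEquiv m L)
        (blockSumSumEquiv m L) = fromBlocks 1 0 0 (fromBlocks Q₁₁ Q₁₂ Q₂₁ Q₂₂) := by
  ext (i | i | i) (j | j | j) <;> simp [trailingTwo, one_apply, Prod.ext_iff, Fin.ext_iff] <;>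
    omega

lemma extendOne_submatrix (Q : Matrix (Fin m × Fin L) (Fin m × Fin L) ℂ) :
    (extendOne Q).submatrix (blockSumEquiv m L) (blockSumEquiv m L) = fromBlocks Q 0 0 1 := by
  ext (i | i) (j | j) <;> simp [extendOne, one_apply]

lemma extendOne_conjTranspose_mul_self {Q : Matrix (Fin m × Fin L) (Fin m × Fin L) ℂ}
    (hQ : Qᴴ * Q = 1) : (extendOne Q)ᴴ * extendOne Q = 1 := by
  have h : ((extendOne Q)ᴴ * extendOne Q).submatrix (blockSumEquiv m L) (blockSumEquiv m L) =
      (1 : Matrix _ _ ℂ).submatrix (blockSumEquiv m L) (blockSumEquiv m L) := by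
    rw [← submatrix_mul_equiv _ _ _ (blockSumEquiv m L), ← conjTranspose_submatrix,
      extendOne_submatrix, submatrix_one_equiv, fromBlocks_conjTranspose, fromBlocks_multiply, hQ]
    simp [fromBlocks_one]
  simpa using congrArg (·.submatrix (blockSumEquiv m L).symm (blockSumEquiv m L).symm) h

lemma stackZero_submatrix : (stackZero R).submatrix (blockSumEquiv m L) id = fromRows R 0 := by
  ext (i | i) j <;> simp [stackZero]

lemma vcat_submatrix {γ : Type*} (T : Matrix (Fin m × Fin L) γ ℂ) (B : Matrix (Fin L) γ ℂ) :
    (vcat T B).submatrix (blockSumEquiv m L) id = fromRows T B := by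
  ext (i | i) j <;> simp [vcat]

end BlockIndex

section Vcat

variable {m L : ℕ} {γ : Type*}

lemma EL_succ (hm : 0 < m) : EL (m+1) L = vcat (EL m L) 0 := by
  ext ⟨i, a⟩ c
  induction i using Fin.lastCases with
  | last => simp [EL, vcat]; omega
  | cast i => simp [EL, vcat]

lemma vcat_mul {γ' : Type*} [Fintype γ] (T : Matrix (Fin m × Fin L) γ ℂ) (B : Matrix (Fin L) γ ℂ)
    (M : Matrix γ γ' ℂ) : vcat T B * M = vcat (T * M) (B * M) := by
  ext ⟨i, a⟩ c
  simp only [vcat, mul_apply, of_apply]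
  split_ifs <;> rfl

lemma extendOne_mul_vcat (Q : Matrix (Fin m × Fin L) (Fin m × Fin L) ℂ)
    (T : Matrix (Fin m × Fin L) γ ℂ) (B : Matrix (Fin L) γ ℂ) :
    extendOne Q * vcat T B = vcat (Q * T) B := by
  ext ⟨i, a⟩ c
  induction i using Fin.lastCases <;>
    simp [extendOne, vcat, mul_apply, Fintype.sum_prod_type, Fin.sum_univ_castSucc]

lemma eq_vcat_iff (Y : Matrix (Fin (m+1) × Fin L) γ ℂ) (T : Matrix (Fin m × Fin L) γ ℂ)
    (B : Matrix (Fin L) γ ℂ) :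
    Y = vcat T B ↔
      (Y.submatrix (blockSumEquiv m L) id).toRows₁ = T ∧
        (Y.submatrix (blockSumEquiv m L) id).toRows₂ = B := by
  rw [← submatrix_equiv_id_inj (blockSumEquiv m L), vcat_submatrix, ← fromRows_inj.eq_iff,
    fromRows_toRows]

lemma mul_EL (M : Matrix γ (Fin (m+1) × Fin L) ℂ) :
    M * EL (m+1) L = M.submatrix id (Prod.mk 0) := by
  ext i c
  simp [mul_apply, EL, Fintype.sum_prod_type, Fin.sum_univ_succ]

lemma vcat_submatrix_blockSumSumEquiv (T : Matrix (Fin (m+1) × Fin L) γ ℂ)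
    (B : Matrix (Fin L) γ ℂ) :
    (vcat T B).submatrix (blockSumSumEquiv m L) id =
      fromRows (T.submatrix (blockSumEquiv m L) id).toRows₁
        (fromRows (T.submatrix (blockSumEquiv m L) id).toRows₂ B) := by
  ext (i | i | i) j <;> simp [vcat] <;> rfl

end Vcat

namespace QRSetup

variable {L p : ℕ} {Hbar : Matrix (Fin (p+2) × Fin L) (Fin (p+1) × Fin L) ℂ}
  {S0 : Matrix (Fin L) (Fin L) ℂ} (S : QRSetup L p Hbar S0)

lemma Qbar_mul_Hsq :
    S.Qbar * Hbar.submatrix (Prod.map Fin.castSucc id) id = twoBlock S.R S.Z S.Hhat := by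
  have h := congrArg (fun M => (M.submatrix (blockSumEquiv (p+1) L) id).toRows₁) S.qr_split
  rw [← submatrix_mul_equiv _ _ _ (blockSumEquiv (p+1) L), extendOne_submatrix,
    ← fromRows_toRows (Hbar.submatrix _ id), fromBlocks_mul_fromRows, toRows₁_fromRows,
    Matrix.zero_mul, add_zero] at h
  rw [← threeBlock_submatrix_castSucc S.R S.Z S.Hhat S.Hsub]
  exact h

lemma isUnit_Qbar : IsUnit S.Qbar :=
  (isUnit_iff_isUnit_det _).mpr (isUnit_det_of_left_inverse S.Qbar_unit)

lemma rank_Hsq_eq_iff :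
    (Hbar.submatrix (Prod.map Fin.castSucc id) id).rank = p * L ↔ S.Hhat = 0 := by
  rw [← rank_mul_eq_right_of_isUnit_det _ _ ((isUnit_iff_isUnit_det _).mp S.isUnit_Qbar),
    Qbar_mul_Hsq, ← rank_submatrix _ (blockSumEquiv p L) (blockSumEquiv p L), twoBlock_submatrix,
    ← rank_fromBlocks_zero₂₁_eq_card_iff S.R_inv, Fintype.card_prod, Fintype.card_fin,
    Fintype.card_fin]

lemma not_isUnit_Hsq_and_rank_iff (hL : 0 < L) :
    (¬ IsUnit (Hbar.submatrix (Prod.map Fin.castSucc id) id) ∧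
      (Hbar.submatrix (Prod.map Fin.castSucc id) id).rank = p * L) ↔ S.Hhat = 0 := by
  refine ⟨fun h => S.rank_Hsq_eq_iff.mp h.2, fun h => ⟨fun hunit => ?_, S.rank_Hsq_eq_iff.mpr h⟩⟩
  have := (rank_of_isUnit _ hunit).symm.trans (S.rank_Hsq_eq_iff.mpr h)
  simp only [Fintype.card_prod, Fintype.card_fin] at this
  nlinarith

abbrev Qtrail : Matrix (Fin L ⊕ Fin L) (Fin L ⊕ Fin L) ℂ := fromBlocks S.Q11 S.Q12 S.Q21 S.Q22

lemma Qtrail_conjTranspose_mul_self : S.Qtrailᴴ * S.Qtrail = 1 := by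
  have h := congrArg (·.submatrix (blockSumSumEquiv p L) (blockSumSumEquiv p L)) S.Qj_unit
  rw [← submatrix_mul_equiv _ _ _ (blockSumSumEquiv p L), ← conjTranspose_submatrix,
    trailingTwo_submatrix, submatrix_one_equiv, fromBlocks_conjTranspose, fromBlocks_multiply,
    ← fromBlocks_one, fromBlocks_inj] at h
  simpa using h.2.2.2

lemma Qtrail_mul_fromRows : S.Qtrail * fromRows S.Hhat S.Hsub = fromRows S.N 0 := by
  have h := congrArg (·.submatrix (blockSumSumEquiv p L) (blockSumEquiv p L))
    (S.qr_split ▸ S.qr_full)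
  rw [← submatrix_mul_equiv _ _ _ (blockSumSumEquiv p L), trailingTwo_submatrix,
    threeBlock_submatrix, threeBlock_submatrix, fromBlocks_multiply, fromBlocks_inj] at h
  simpa using h.2.2.2

lemma Hhat_eq_zero_iff_Q11_eq_zero : S.Hhat = 0 ↔ S.Q11 = 0 :=
  eq_zero_iff_of_unitary_fromBlocks_mul_fromRows S.Qtrail_conjTranspose_mul_self
    S.Qtrail_mul_fromRows S.N_inv

lemma R_mul_eq_of_isUniqueFrobMin {Y : Matrix (Fin p × Fin L) (Fin L) ℂ}
    (hY : IsUniqueFrobMin (Hbar.submatrix (Prod.map Fin.castSucc id) (Prod.map Fin.castSucc id))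
      (EL (p+1) L * S0) Y) :
    S.R * Y = ((S.Qbar * (EL (p+1) L * S0)).submatrix (blockSumEquiv p L) id).toRows₁ := by
  simpa using hY.mul_eq_toRows₁ S.Qbar_unit (blockSumEquiv p L) (Equiv.refl _) S.R_inv
    (by simpa [S.qr_prev] using stackZero_submatrix S.R)

def Qfull : Matrix (Fin (p+2) × Fin L) (Fin (p+2) × Fin L) ℂ :=
  trailingTwo (m := p) S.Q11 S.Q12 S.Q21 S.Q22 * extendOne S.Qbar

lemma Qfull_conjTranspose_mul_self : S.Qfullᴴ * S.Qfull = 1 := by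
  rw [Qfull, conjTranspose_mul, Matrix.mul_assoc, ← Matrix.mul_assoc _ (trailingTwo _ _ _ _),
    S.Qj_unit, Matrix.one_mul, extendOne_conjTranspose_mul_self S.Qbar_unit]

lemma Qfull_mul_Hbar : S.Qfull * Hbar = threeBlock S.R S.Z S.N 0 := by
  rw [Qfull, Matrix.mul_assoc]
  exact S.qr_full

lemma Qfull_mul_EL :
    (S.Qfull * (EL (p+2) L * S0)).submatrix (blockSumSumEquiv p L) id =
      fromRows ((S.Qbar * (EL (p+1) L * S0)).submatrix (blockSumEquiv p L) id).toRows₁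
        (fromRows (S.Q11 * S.Ct) (S.Q21 * S.Ct)) := by
  rw [Qfull, EL_succ (Nat.succ_pos p), vcat_mul, Matrix.zero_mul, Matrix.mul_assoc,
    extendOne_mul_vcat, ← submatrix_mul_equiv _ _ _ (blockSumSumEquiv p L),
    trailingTwo_submatrix, vcat_submatrix_blockSumSumEquiv, fromBlocks_mul_fromRows,
    fromBlocks_mul_fromRows]
  simp only [Matrix.one_mul, Matrix.zero_mul, Matrix.mul_zero, add_zero, zero_add]
  rfl

lemma block_eqs_of_isUniqueFrobMin {Y : Matrix (Fin (p+1) × Fin L) (Fin L) ℂ}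
    (hY : IsUniqueFrobMin Hbar (EL (p+2) L * S0) Y) :
    S.R * (Y.submatrix (blockSumEquiv p L) id).toRows₁ +
        S.Z * (Y.submatrix (blockSumEquiv p L) id).toRows₂ =
      ((S.Qbar * (EL (p+1) L * S0)).submatrix (blockSumEquiv p L) id).toRows₁ ∧
    S.N * (Y.submatrix (blockSumEquiv p L) id).toRows₂ = S.Q11 * S.Ct := by
  have hRN : IsUnit (fromBlocks S.R S.Z 0 S.N) := by
    rw [isUnit_iff_isUnit_det, det_fromBlocks_zero₂₁]
    exact ((isUnit_iff_isUnit_det _).mp S.R_inv).mul ((isUnit_iff_isUnit_det _).mp S.N_inv)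
  have hQR : (S.Qfull * Hbar).submatrix ((Equiv.sumAssoc _ _ _).trans (blockSumSumEquiv p L))
      (blockSumEquiv p L) = fromRows (fromBlocks S.R S.Z 0 S.N) 0 := by
    change ((S.Qfull * Hbar).submatrix (blockSumSumEquiv p L) (blockSumEquiv p L)).submatrix
      (Equiv.sumAssoc _ _ _) id = _
    rw [Qfull_mul_Hbar, threeBlock_submatrix]
    ext ((i | i) | i) (j | j) <;> simp
  have h := hY.mul_eq_toRows₁ S.Qfull_conjTranspose_mul_self _ _ hRN hQR
  change _ = (((S.Qfull * (EL (p+2) L * S0)).submatrix (blockSumSumEquiv p L) id).submatrix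
    (Equiv.sumAssoc _ _ _) id).toRows₁ at h
  rw [Qfull_mul_EL, fromRows_fromRows_submatrix_sumAssoc, toRows₁_fromRows,
    ← fromRows_toRows (Y.submatrix _ id), fromBlocks_mul_fromRows, Matrix.zero_mul, zero_add] at h
  exact fromRows_inj.eq_iff.mp h

end QRSetup

namespace BlockArnoldi

variable {n L p : ℕ} (D : BlockArnoldi n L p)

lemma Wfull_conjTranspose_mul_self : D.Wfullᴴ * D.Wfull = 1 := by
  rw [Wfull, conjTranspose_submatrix, ← submatrix_mul _ _ _ _ _ Function.bijective_id, D.orth,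
    submatrix_one _ ((Fin.castSucc_injective _).prodMap Function.injective_id)]

lemma Wfull_mul_inj {γ : Type*} {Y₁ Y₂ : Matrix (Fin (p+1) × Fin L) γ ℂ} :
    D.Wfull * Y₁ = D.Wfull * Y₂ ↔ Y₁ = Y₂ := by
  refine ⟨fun h => ?_, congrArg _⟩
  simpa [← Matrix.mul_assoc, D.Wfull_conjTranspose_mul_self] using congrArg (D.Wfullᴴ * ·) h

lemma Wprev_mul_eq (Y : Matrix (Fin p × Fin L) (Fin L) ℂ) :
    D.Wprev * Y = D.Wfull * vcat Y 0 := by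
  have h := submatrix_mul_equiv D.Wfull (vcat Y 0) id (blockSumEquiv p L) id
  rw [vcat_submatrix, submatrix_id_id] at h
  rw [← h, show D.Wfull.submatrix id (blockSumEquiv p L) = fromCols D.Wprev D.Vj by
    ext i (j | j) <;> rfl, fromCols_mul_fromRows, Matrix.mul_zero, add_zero]

lemma A_mul_Wprev : D.A * D.Wprev = D.Wfull * D.Hprev := by
  have hH : D.Hbar.submatrix (blockSumEquiv (p+1) L) (Prod.map Fin.castSucc id) =
      fromRows D.Hprev 0 := by
    ext (i | i) j
    · rfl
    · exact D.hess _ _ (by simp)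
  have hW : D.W.submatrix id (blockSumEquiv (p+1) L) =
      fromCols D.Wfull (D.W.submatrix id (Prod.mk (Fin.last (p+1)))) := by
    ext i (j | j) <;> rfl
  change (D.A * D.Wfull).submatrix id (Prod.map Fin.castSucc id) = _
  rw [show D.A * D.Wfull = D.W * D.Hbar from D.arnoldi,
    submatrix_mul _ _ _ (blockSumEquiv (p+1) L) _ (Equiv.bijective _), hH, hW,
    fromCols_mul_fromRows, Matrix.mul_zero, add_zero]

lemma residual_eq_Wfull_mul (Y : Matrix (Fin p × Fin L) (Fin L) ℂ) :
    D.B - D.A * (D.X0 + D.Wprev * Y) = D.Wfull * (EL (p+1) L * D.S0 - D.Hprev * Y) := by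
  have hF0 : D.B - D.A * D.X0 = D.Wfull * (EL (p+1) L * D.S0) := by
    rw [D.F0_eq, ← Matrix.mul_assoc, mul_EL]
    rfl
  rw [Matrix.mul_add, ← sub_sub, hF0, ← Matrix.mul_assoc D.A, A_mul_Wprev, Matrix.mul_assoc,
    ← Matrix.mul_sub]

end BlockArnoldi

lemma QRSetup.isUnit_Ct {n L p : ℕ} {D : BlockArnoldi n L p} (S : QRSetup L p D.Hbar D.S0)
    {Y : Matrix (Fin p × Fin L) (Fin L) ℂ} (hY : IsBlockGMRESprev D Y)
    (hF : (D.B - D.A * (D.X0 + D.Wprev * Y)).rank = L) : IsUnit S.Ct := by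
  set M := EL (p+1) L * D.S0 - D.Hprev * Y
  have hQM : (S.Qbar * M).submatrix (blockSumEquiv p L) id =
      fromRows (0 : Matrix (Fin p × Fin L) (Fin L) ℂ) 1 * S.Ct := by
    rw [Matrix.mul_sub, ← Matrix.mul_assoc S.Qbar D.Hprev,
      show S.Qbar * D.Hprev = stackZero S.R from S.qr_prev]
    change (S.Qbar * (EL (p+1) L * D.S0)).submatrix (blockSumEquiv p L) id -
      (stackZero S.R * Y).submatrix (blockSumEquiv p L) id = _
    rw [← fromRows_toRows ((S.Qbar * (EL (p+1) L * D.S0)).submatrix _ id),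
      ← S.R_mul_eq_of_isUniqueFrobMin hY,
      submatrix_mul (stackZero S.R) Y _ id id Function.bijective_id,
      stackZero_submatrix, submatrix_id_id, fromRows_mul, fromRows_mul, Matrix.zero_mul]
    ext (i | i) j <;> simp
    rfl
  have hle : L ≤ S.Ct.rank := calc
    L = (D.Wfull * M).rank := by rw [← D.residual_eq_Wfull_mul, hF]
    _ ≤ M.rank := rank_mul_le_right _ _
    _ = (S.Qbar * M).rank :=
      (rank_mul_eq_right_of_isUnit_det _ _ ((isUnit_iff_isUnit_det _).mp S.isUnit_Qbar)).symm
    _ = (fromRows (0 : Matrix (Fin p × Fin L) (Fin L) ℂ) 1 * S.Ct).rank := by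
      rw [← hQM, ← rank_submatrix _ (blockSumEquiv p L) (Equiv.refl _)]
      rfl
    _ ≤ S.Ct.rank := rank_mul_le_right _ _
  refine isUnit_of_rank_eq_card (le_antisymm ?_ (by simpa using hle))
  simpa using rank_le_card_width S.Ct

/-- `H_j` is singular with `rank H_j = (j-1)L` if and only if block
GMRES totally stagnates at step `j`, i.e. `X_j^(G) = X_{j-1}^(G)`. -/
theorem stmt11 {n L p : ℕ} (D : BlockArnoldi n L p) (S : QRSetup L p D.Hbar D.S0)
    (Yj : Matrix (Fin (p+1) × Fin L) (Fin L) ℂ) (hYj : IsBlockGMRESj D Yj)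
    (Yprev : Matrix (Fin p × Fin L) (Fin L) ℂ) (hYprev : IsBlockGMRESprev D Yprev)
    (hF : (D.B - D.A * (D.X0 + D.Wprev * Yprev)).rank = L) :
    (¬ IsUnit D.Hsq ∧ D.Hsq.rank = p * L) ↔
      D.X0 + D.Wfull * Yj = D.X0 + D.Wprev * Yprev := by
  obtain ⟨htop, hbot⟩ := S.block_eqs_of_isUniqueFrobMin hYj
  rw [← S.R_mul_eq_of_isUniqueFrobMin hYprev] at htop
  rw [BlockArnoldi.Hsq, S.not_isUnit_Hsq_and_rank_iff D.hL, S.Hhat_eq_zero_iff_Q11_eq_zero,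
    add_right_inj, D.Wprev_mul_eq, D.Wfull_mul_inj, eq_vcat_iff]
  set Yb := (Yj.submatrix (blockSumEquiv p L) id).toRows₂
  have hYb : Yb = 0 ↔ S.Q11 = 0 := by
    rw [← S.N_inv.mul_right_eq_zero, hbot, (S.isUnit_Ct hYprev hF).mul_left_eq_zero]
  constructor
  · intro hQ
    have hYb0 := hYb.mpr hQ
    rw [hYb0, Matrix.mul_zero, add_zero] at htop
    exact ⟨mul_right_injective_of_inv _ _
      (nonsing_inv_mul _ ((isUnit_iff_isUnit_det _).mp S.R_inv)) htop, hYb0⟩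
  · exact fun h => hYb.mp h.2
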